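/- arXiv:2403.03275 — 6 statements merged into one kernel-verified Lean document; each statement's English description precedes it below -/
import Mathlib

section
/- Let a,b>0 and suppose (p_N)_{N≥1} with p_N:{0,1}^N→ℝ satisfies the basic weight equations: p_1(0)=1+a, p_1(1)=1+b; for N≥2, p_N(0,τ_2,…,τ_N)=(1+a)·p_{N−1}(τ_2,…,τ_N) for all (τ_2,…,τ_N)∈{0,1}^{N−1}; p_N(τ_1,…,τ_{N−1},1)=(1+b)·p_{N−1}(τ_1,…,τ_{N−1}) for all (τ_1,…,τ_{N−1})∈{0,1}^{N−1}; and for every 1≤n≤N−1, p_N(τ_1,…,τ_{n−1},1,0,τ_{n+2},…,τ_N)=p_{N−1}(τ_1,…,τ_{n−1},1,τ_{n+2},…,τ_N)+p_{N−1}(τ_1,…,τ_{n−1},0,τ_{n+2},…,τ_N). Then p_N(τ)=f_N(τ) for every N≥1 and every τ∈{0,1}^N. -/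
open Finset

/-- Partial sum `s^τ(k) = τ_1 + ⋯ + τ_k` of a word `τ ∈ {0,1}^N`. -/
def pSum {N : ℕ} (τ : Fin N → Fin 2) (k : ℕ) : ℤ :=
  ∑ i : Fin N, if (i : ℕ) < k then ((τ i : ℕ) : ℤ) else 0

/-- `min_{0 ≤ j ≤ N} (s^τ(j) − s^ξ(j))`. -/
def minDiff {N : ℕ} (τ ξ : Fin N → Fin 2) : ℤ :=
  (Finset.range (N + 1)).inf' (by simp) fun j => pSum τ j - pSum ξ j

/-- `f_N(τ) = Σ_ξ b^(s^τ(N)−s^ξ(N)) (ab)^(−min_{0≤j≤N}(s^τ(j)−s^ξ(j)))`. -/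
noncomputable def fTL (a b : ℝ) {N : ℕ} (τ : Fin N → Fin 2) : ℝ :=
  ∑ ξ : Fin N → Fin 2, b ^ (pSum τ N - pSum ξ N) * (a * b) ^ (-(minDiff τ ξ))

/-!
Both `p` and `fTL a b` satisfy the same recursions: prepending `0` multiplies by `1 + a`,
appending `1` multiplies by `1 + b`, and a factor `10` splits into the two words with `1` and
with `0` in its place. Every word of length at least two starts with `0`, ends with `1` or
contains a factor `10`, so these recursions and the values on single letters determine the family
by induction on the length. For `fTL` the recursions come from splitting the sum over `ξ` along
the same factorisation: under concatenation partial sums add and running minima combine.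
-/

section FinTupleSums

variable {α β : Type*} [Fintype α] [AddCommMonoid β]

theorem sum_fin_cons {n : ℕ} (F : (Fin (n + 1) → α) → β) :
    ∑ ξ, F ξ = ∑ x, ∑ σ : Fin n → α, F (Fin.cons x σ) :=
  (Fintype.sum_equiv (Fin.consEquiv fun _ => α) _ _ fun _ => rfl).symm.trans
    (Fintype.sum_prod_type _)

theorem sum_fin_snoc {n : ℕ} (F : (Fin (n + 1) → α) → β) :
    ∑ ξ, F ξ = ∑ x, ∑ σ : Fin n → α, F (Fin.snoc σ x) :=
  (Fintype.sum_equiv (Fin.snocEquiv fun _ => α) _ _ fun _ => rfl).symm.trans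
    (Fintype.sum_prod_type _)

theorem sum_fin_append {k m : ℕ} (F : (Fin (k + m) → α) → β) :
    ∑ ξ, F ξ = ∑ σ : Fin k → α, ∑ ρ : Fin m → α, F (Fin.append σ ρ) :=
  (Fintype.sum_equiv (Fin.appendEquiv k m) _ _ fun _ => rfl).symm.trans
    (Fintype.sum_prod_type _)

theorem sum_fin_one_pi (F : (Fin 1 → α) → β) : ∑ v, F v = ∑ x, F ![x] := by
  simp only [sum_fin_cons, Finset.univ_unique, Finset.sum_singleton]
  exact Finset.sum_congr rfl fun x _ =>
    congrArg (fun σ : Fin 0 → α => F (Fin.cons x σ)) (Subsingleton.elim _ _)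

theorem sum_fin_two_pi (F : (Fin 2 → α) → β) : ∑ w, F w = ∑ x, ∑ y, F ![x, y] := by
  rw [sum_fin_cons]
  exact Finset.sum_congr rfl fun x _ => sum_fin_one_pi _

end FinTupleSums

theorem exists_lt_and_not_succ {Q : ℕ → Prop} {n : ℕ} (h0 : Q 0) (hn : ¬ Q n) :
    ∃ i < n, Q i ∧ ¬ Q (i + 1) := by
  induction n with
  | zero => exact absurd h0 hn
  | succ n ih =>
    by_cases hQ : Q n
    · exact ⟨n, n.lt_succ_self, hQ, hn⟩
    · obtain ⟨i, hi, hQi, hQi'⟩ := ih hQ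
      exact ⟨i, by omega, hQi, hQi'⟩

section WordStatistics

variable {k m n : ℕ}

theorem pSum_zero (τ : Fin n → Fin 2) : pSum τ 0 = 0 := by
  simp [pSum]

theorem pSum_append_of_le (σ : Fin k → Fin 2) (ρ : Fin m → Fin 2) {j : ℕ} (h : j ≤ k) :
    pSum (Fin.append σ ρ) j = pSum σ j := by
  rw [pSum, pSum, Fin.sum_univ_add]
  simp only [Fin.append_left, Fin.append_right, Fin.val_castAdd, Fin.val_natAdd]
  exact add_eq_left.mpr (Finset.sum_eq_zero fun i _ => if_neg (by omega))

theorem pSum_append_add (σ : Fin k → Fin 2) (ρ : Fin m → Fin 2) (t : ℕ) :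
    pSum (Fin.append σ ρ) (k + t) = pSum σ k + pSum ρ t := by
  rw [pSum, pSum, pSum, Fin.sum_univ_add]
  simp only [Fin.append_left, Fin.append_right, Fin.val_castAdd, Fin.val_natAdd,
    add_lt_add_iff_left]
  congr 1
  exact Finset.sum_congr rfl fun i _ => by rw [if_pos (by omega), if_pos i.2]

theorem pSum_comp_cast {n' : ℕ} (h : n = n') (τ : Fin n' → Fin 2) (j : ℕ) :
    pSum (τ ∘ Fin.cast h) j = pSum τ j := by
  subst h; rfl

theorem pSum_singleton (x : Fin 2) : pSum ![x] 1 = x := by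
  simp [pSum]

theorem minDiff_le {τ ξ : Fin n → Fin 2} {j : ℕ} (hj : j ≤ n) :
    minDiff τ ξ ≤ pSum τ j - pSum ξ j :=
  Finset.inf'_le _ (Finset.mem_range.mpr (Nat.lt_succ_of_le hj))

theorem minDiff_nonpos (τ ξ : Fin n → Fin 2) : minDiff τ ξ ≤ 0 := by
  simpa [pSum_zero] using minDiff_le (τ := τ) (ξ := ξ) (Nat.zero_le n)

theorem minDiff_comp_cast {n' : ℕ} (h : n = n') (τ ξ : Fin n' → Fin 2) :
    minDiff (τ ∘ Fin.cast h) (ξ ∘ Fin.cast h) = minDiff τ ξ := by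
  subst h; rfl

theorem minDiff_singleton (x z : Fin 2) : minDiff ![x] ![z] = min 0 ((x : ℤ) - z) := by
  fin_cases x <;> fin_cases z <;> decide

theorem range_add_succ_eq_union (k m : ℕ) :
    Finset.range (k + m + 1) = Finset.range (k + 1) ∪ (Finset.range (m + 1)).image (k + ·) := by
  ext j
  simp only [Finset.mem_range, Finset.mem_union, Finset.mem_image]
  refine ⟨fun h => ?_, ?_⟩
  · by_cases hj : j < k + 1
    · exact Or.inl hj
    · exact Or.inr ⟨j - k, by omega, by omega⟩
  · rintro (h | ⟨i, hi, rfl⟩) <;> omega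

theorem minDiff_append (σ σ' : Fin k → Fin 2) (ρ ρ' : Fin m → Fin 2) :
    minDiff (Fin.append σ ρ) (Fin.append σ' ρ') =
      min (minDiff σ σ') (pSum σ k - pSum σ' k + minDiff ρ ρ') := by
  rw [minDiff, Finset.inf'_congr _ (range_add_succ_eq_union k m) fun _ _ => rfl,
    Finset.inf'_union (by simp) (by simp), Finset.inf'_image]
  congr 1
  · refine Finset.inf'_congr _ rfl fun j hj => ?_
    have hj : j ≤ k := Nat.lt_succ_iff.mp (Finset.mem_range.mp hj)
    rw [pSum_append_of_le _ _ hj, pSum_append_of_le _ _ hj]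
  · rw [minDiff,
      Finset.apply_inf'_eq_inf'_comp _ (_ + ·) fun _ _ => (min_add_add_left _ _ _).symm]
    refine Finset.inf'_congr _ rfl fun t _ => ?_
    simp only [Function.comp_apply, pSum_append_add]
    ring

theorem pSum_cons_add_one (x : Fin 2) (τ : Fin n → Fin 2) (j : ℕ) :
    pSum (Fin.cons x τ) (j + 1) = x + pSum τ j := by
  rw [Fin.cons_eq_append, pSum_comp_cast, add_comm j, pSum_append_add]
  exact congrArg (· + _) (pSum_singleton x)

theorem minDiff_cons (x z : Fin 2) (τ ξ : Fin n → Fin 2) :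
    minDiff (Fin.cons x τ) (Fin.cons z ξ) = min 0 ((x : ℤ) - z + minDiff τ ξ) := by
  rw [Fin.cons_eq_append, Fin.cons_eq_append z, minDiff_comp_cast, minDiff_append]
  -- `Fin.cons_eq_append` leaves the singletons at type `Fin (0 + 1) → Fin 2`
  change min (minDiff ![x] ![z]) (pSum ![x] 1 - pSum ![z] 1 + _) = _
  rw [minDiff_singleton, pSum_singleton, pSum_singleton]
  have := minDiff_nonpos τ ξ
  omega

theorem pSum_snoc (τ : Fin n → Fin 2) (x : Fin 2) :
    pSum (Fin.snoc τ x) (n + 1) = pSum τ n + x := by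
  rw [Fin.snoc_eq_append, pSum_append_add]
  exact congrArg (_ + ·) (pSum_singleton x)

theorem minDiff_snoc (τ ξ : Fin n → Fin 2) (x z : Fin 2) :
    minDiff (Fin.snoc τ x) (Fin.snoc ξ z) =
      min (minDiff τ ξ) (pSum τ n - pSum ξ n + (x - z)) := by
  rw [Fin.snoc_eq_append, Fin.snoc_eq_append, minDiff_append]
  change min _ (_ + minDiff ![x] ![z]) = _
  rw [minDiff_singleton]
  have := minDiff_le (τ := τ) (ξ := ξ) le_rfl
  omega

end WordStatistics

noncomputable def fTLTerm (a b : ℝ) {N : ℕ} (τ ξ : Fin N → Fin 2) : ℝ :=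
  b ^ (pSum τ N - pSum ξ N) * (a * b) ^ (-(minDiff τ ξ))

section fTLRecursions

variable {a b : ℝ} {n : ℕ}

theorem fTL_eq_sum_fTLTerm (τ : Fin n → Fin 2) : fTL a b τ = ∑ ξ, fTLTerm a b τ ξ := rfl

theorem fTL_of_isEmpty (τ : Fin 0 → Fin 2) : fTL a b τ = 1 := by
  simp [fTL, pSum, minDiff]

theorem fTLTerm_cons_zero_zero (τ ξ : Fin n → Fin 2) :
    fTLTerm a b (Fin.cons 0 τ) (Fin.cons 0 ξ) = fTLTerm a b τ ξ := by
  have hm : minDiff (Fin.cons 0 τ) (Fin.cons 0 ξ) = minDiff τ ξ := by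
    rw [minDiff_cons]
    have := minDiff_nonpos τ ξ
    simp [this]
  rw [fTLTerm, fTLTerm, hm, pSum_cons_add_one, pSum_cons_add_one]
  simp

theorem fTLTerm_cons_zero_one (ha : a ≠ 0) (hb : b ≠ 0) (τ ξ : Fin n → Fin 2) :
    fTLTerm a b (Fin.cons 0 τ) (Fin.cons 1 ξ) = a * fTLTerm a b τ ξ := by
  have hm : minDiff (Fin.cons 0 τ) (Fin.cons 1 ξ) = minDiff τ ξ - 1 := by
    rw [minDiff_cons]
    have := minDiff_nonpos τ ξ
    simp only [Fin.val_zero, Fin.val_one, Nat.cast_zero, Nat.cast_one]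
    omega
  rw [fTLTerm, fTLTerm, hm, pSum_cons_add_one, pSum_cons_add_one]
  simp only [Fin.val_zero, Fin.val_one, Nat.cast_zero, Nat.cast_one]
  rw [show 0 + pSum τ n - (1 + pSum ξ n) = pSum τ n - pSum ξ n - 1 by ring,
    show -(minDiff τ ξ - 1) = -minDiff τ ξ + 1 by ring, zpow_sub₀ hb,
    zpow_add₀ (mul_ne_zero ha hb)]
  field_simp

theorem fTLTerm_snoc_one_zero (hb : b ≠ 0) (τ ξ : Fin n → Fin 2) :
    fTLTerm a b (Fin.snoc τ 1) (Fin.snoc ξ 0) = b * fTLTerm a b τ ξ := by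
  have hm : minDiff (Fin.snoc τ 1) (Fin.snoc ξ 0) = minDiff τ ξ := by
    rw [minDiff_snoc]
    have := minDiff_le (τ := τ) (ξ := ξ) le_rfl
    simp only [Fin.val_zero, Fin.val_one, Nat.cast_zero, Nat.cast_one]
    omega
  rw [fTLTerm, fTLTerm, hm, pSum_snoc, pSum_snoc]
  simp only [Fin.val_zero, Fin.val_one, Nat.cast_zero, Nat.cast_one]
  rw [show pSum τ n + 1 - (pSum ξ n + 0) = pSum τ n - pSum ξ n + 1 by ring, zpow_add_one₀ hb]
  ring

theorem fTLTerm_snoc_one_one (τ ξ : Fin n → Fin 2) :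
    fTLTerm a b (Fin.snoc τ 1) (Fin.snoc ξ 1) = fTLTerm a b τ ξ := by
  have hm : minDiff (Fin.snoc τ 1) (Fin.snoc ξ 1) = minDiff τ ξ := by
    rw [minDiff_snoc]
    have := minDiff_le (τ := τ) (ξ := ξ) le_rfl
    simp only [sub_self, add_zero]
    omega
  rw [fTLTerm, fTLTerm, hm, pSum_snoc, pSum_snoc, add_sub_add_right_eq_sub]

theorem fTL_cons_zero (ha : a ≠ 0) (hb : b ≠ 0) (τ : Fin n → Fin 2) :
    fTL a b (Fin.cons 0 τ) = (1 + a) * fTL a b τ := by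
  simp only [fTL_eq_sum_fTLTerm, sum_fin_cons (n := n), Fin.sum_univ_two, fTLTerm_cons_zero_zero,
    fTLTerm_cons_zero_one ha hb, ← Finset.mul_sum]
  ring

theorem fTL_snoc_one (hb : b ≠ 0) (τ : Fin n → Fin 2) :
    fTL a b (Fin.snoc τ 1) = (1 + b) * fTL a b τ := by
  simp only [fTL_eq_sum_fTLTerm, sum_fin_snoc (n := n), Fin.sum_univ_two, fTLTerm_snoc_one_zero hb,
    fTLTerm_snoc_one_one, ← Finset.mul_sum]
  ring

theorem fTL_singleton_zero (ha : a ≠ 0) (hb : b ≠ 0) : fTL a b ![0] = 1 + a := by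
  rw [show ![(0 : Fin 2)] = Fin.cons 0 ![] from rfl, fTL_cons_zero ha hb, fTL_of_isEmpty, mul_one]

theorem fTL_singleton_one (hb : b ≠ 0) : fTL a b ![1] = 1 + b := by
  rw [show ![(1 : Fin 2)] = Fin.snoc ![] 1 by decide, fTL_snoc_one hb, fTL_of_isEmpty, mul_one]

theorem fTLTerm_append_congr {k m l l' : ℕ} (α β : Fin k → Fin 2) (γ δ : Fin m → Fin 2)
    {w w' : Fin l → Fin 2} {v v' : Fin l' → Fin 2}
    (hs : pSum w l - pSum w' l = pSum v l' - pSum v' l') (hm : minDiff w w' = minDiff v v') :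
    fTLTerm a b (Fin.append (Fin.append α w) γ) (Fin.append (Fin.append β w') δ) =
      fTLTerm a b (Fin.append (Fin.append α v) γ) (Fin.append (Fin.append β v') δ) := by
  simp only [fTLTerm, pSum_append_add, minDiff_append, hm, add_sub_add_comm, hs]

theorem fTL_append_one_zero {k m : ℕ} (α : Fin k → Fin 2) (γ : Fin m → Fin 2) :
    fTL a b (Fin.append (Fin.append α ![1, 0]) γ) =
      fTL a b (Fin.append (Fin.append α ![1]) γ) +
        fTL a b (Fin.append (Fin.append α ![0]) γ) := by
  have h10 : ∀ z β δ, fTLTerm a b (Fin.append (Fin.append α ![1, 0]) γ)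
      (Fin.append (Fin.append β ![0, z]) δ) =
        fTLTerm a b (Fin.append (Fin.append α ![1]) γ) (Fin.append (Fin.append β ![z]) δ) :=
    fun z β δ => fTLTerm_append_congr α β γ δ (by revert z; decide) (by revert z; decide)
  have h11 : ∀ z β δ, fTLTerm a b (Fin.append (Fin.append α ![1, 0]) γ)
      (Fin.append (Fin.append β ![1, z]) δ) =
        fTLTerm a b (Fin.append (Fin.append α ![0]) γ) (Fin.append (Fin.append β ![z]) δ) :=
    fun z β δ => fTLTerm_append_congr α β γ δ (by revert z; decide) (by revert z; decide)
  simp only [fTL_eq_sum_fTLTerm, sum_fin_append (k := k + 2), sum_fin_append (k := k + 1),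
    sum_fin_append (k := k), sum_fin_two_pi, sum_fin_one_pi, Fin.sum_univ_two, h10, h11,
    Finset.sum_add_distrib]
  ring

end fTLRecursions

theorem eq_append_one_zero_append {k m : ℕ} (τ : Fin (k + 2 + m) → Fin 2)
    (h1 : τ ⟨k, by omega⟩ = 1) (h0 : τ ⟨k + 1, by omega⟩ = 0) :
    τ = Fin.append (Fin.append (fun i => τ (Fin.castAdd m (Fin.castAdd 2 i))) ![1, 0])
      (fun i => τ (Fin.natAdd (k + 2) i)) := by
  conv_lhs => rw [← Fin.append_castAdd_natAdd (f := τ),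
    ← Fin.append_castAdd_natAdd (f := fun i => τ (Fin.castAdd m i))]
  congr 2
  funext i
  fin_cases i
  exacts [h1, h0]

theorem binaryWord_induction {P : ∀ n, (Fin n → Fin 2) → Prop}
    (zero : P 1 ![0]) (one : P 1 ![1])
    (cons_zero : ∀ n τ, 1 ≤ n → P n τ → P (n + 1) (Fin.cons 0 τ))
    (snoc_one : ∀ n τ, 1 ≤ n → P n τ → P (n + 1) (Fin.snoc τ 1))
    (append_one_zero : ∀ k m (α : Fin k → Fin 2) (γ : Fin m → Fin 2),
      P (k + 1 + m) (Fin.append (Fin.append α ![1]) γ) →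
      P (k + 1 + m) (Fin.append (Fin.append α ![0]) γ) →
      P (k + 2 + m) (Fin.append (Fin.append α ![1, 0]) γ)) :
    ∀ n, 1 ≤ n → ∀ τ, P n τ := by
  intro n
  induction n using Nat.strong_induction_on with | _ n ih => ?_
  intro hn τ
  obtain rfl | hn2 : n = 1 ∨ 2 ≤ n := by omega
  · have hτ : τ = ![τ 0] := funext fun i => by rw [Subsingleton.elim i 0]; rfl
    rcases Fin.exists_fin_two.mp ⟨τ 0, rfl⟩ with h | h <;> rw [hτ, h] <;> assumption
  by_cases hfirst : τ ⟨0, by omega⟩ = 0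
  · obtain ⟨n, rfl⟩ : ∃ n', n = n' + 1 := ⟨n - 1, by omega⟩
    rw [← Fin.cons_self_tail τ, show τ 0 = 0 from hfirst]
    exact cons_zero n _ (by omega) (ih n (by omega) (by omega) _)
  by_cases hlast : τ ⟨n - 1, by omega⟩ = 1
  · obtain ⟨n, rfl⟩ : ∃ n', n = n' + 1 := ⟨n - 1, by omega⟩
    rw [← Fin.snoc_init_self τ, show τ (Fin.last n) = 1 from hlast]
    exact snoc_one n _ (by omega) (ih n (by omega) (by omega) _)
  -- `τ` starts with `1` and ends with `0`, so some `1` is followed by a `0`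
  obtain ⟨k, hk, h1, h0⟩ := exists_lt_and_not_succ (n := n - 1)
    (Q := fun j => ∀ h : j < n, τ ⟨j, h⟩ = 1)
    (fun _ => Fin.eq_one_of_ne_zero _ hfirst) (fun h => hlast (h (by omega)))
  obtain ⟨hk1, h0⟩ := not_forall.mp h0
  obtain ⟨m, rfl⟩ := Nat.exists_eq_add_of_le (show k + 2 ≤ n from hk1)
  rw [eq_append_one_zero_append τ (h1 _) (by omega)]
  exact append_one_zero k m _ _ (ih _ (by omega) (by omega) _) (ih _ (by omega) (by omega) _)

theorem stmt0 (a b : ℝ) (ha : 0 < a) (hb : 0 < b)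
    (p : (N : ℕ) → (Fin N → Fin 2) → ℝ)
    (hinit0 : p 1 ![0] = 1 + a)
    (hinit1 : p 1 ![1] = 1 + b)
    (hleft : ∀ (N : ℕ), 1 ≤ N → ∀ τ : Fin N → Fin 2,
      p (N + 1) (Fin.cons 0 τ) = (1 + a) * p N τ)
    (hright : ∀ (N : ℕ), 1 ≤ N → ∀ τ : Fin N → Fin 2,
      p (N + 1) (Fin.snoc τ 1) = (1 + b) * p N τ)
    (hbulk : ∀ (k m : ℕ) (α : Fin k → Fin 2) (γ : Fin m → Fin 2),
      p (k + 2 + m) (Fin.append (Fin.append α ![1, 0]) γ)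
        = p (k + 1 + m) (Fin.append (Fin.append α ![1]) γ)
          + p (k + 1 + m) (Fin.append (Fin.append α ![0]) γ)) :
    ∀ (N : ℕ), 1 ≤ N → ∀ τ : Fin N → Fin 2, p N τ = fTL a b τ := by
  refine binaryWord_induction ?_ ?_ ?_ ?_ ?_
  · rw [hinit0, fTL_singleton_zero ha.ne' hb.ne']
  · rw [hinit1, fTL_singleton_one hb.ne']
  · intro n τ hn ih
    rw [hleft n hn, fTL_cons_zero ha.ne' hb.ne', ih]
  · intro n τ hn ih
    rw [hright n hn, fTL_snoc_one hb.ne', ih]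
  · intro k m α γ ih1 ih0
    rw [hbulk, ih1, ih0, fTL_append_one_zero]
end

section
/- For all a,b>0, N≥2, 1≤n≤N−1, and all τ_1,…,τ_{n−1},τ_{n+2},…,τ_N∈{0,1}, one has f_N(τ_1,…,τ_{n−1},1,0,τ_{n+2},…,τ_N)=f_{N−1}(τ_1,…,τ_{n−1},1,τ_{n+2},…,τ_N)+f_{N−1}(τ_1,…,τ_{n−1},0,τ_{n+2},…,τ_N). -/
/-! The summand of `f_N(τ)` indexed by `ξ` depends only on the profile
`P(τ, ξ) = (min_j (s^τ(j) - s^ξ(j)), s^τ(N) - s^ξ(N))`, and profiles compose under concatenation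
by the min-plus rule `(m, d) ∘ (m', d') = (min m (d + m'), d + d')`. Hence `f(α μ γ)` depends on the
middle word `μ` only through the multiset of profiles `P(μ, ν)`, `ν ∈ {0,1}^|μ|`. For `μ = 10` these
are `(0,1), (0,0), (0,0), (-1,-1)`: the profiles for `μ = 1` followed by those for `μ = 0`. -/

open Finset

lemma pSum_zero_s3 {N : ℕ} (u : Fin N → Fin 2) : pSum u 0 = 0 := by simp [pSum]

lemma pSum_of_le {N j : ℕ} (u : Fin N → Fin 2) (h : N ≤ j) : pSum u j = pSum u N :=
  sum_congr rfl fun i _ => by rw [if_pos (by omega), if_pos i.isLt]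

lemma pSum_append {p q : ℕ} (u : Fin p → Fin 2) (v : Fin q → Fin 2) (j : ℕ) :
    pSum (Fin.append u v) j = pSum u j + pSum v (j - p) := by
  rw [pSum, Fin.sum_univ_add]
  congr 1 <;> refine sum_congr rfl fun i _ => ?_
  · simp
  · simp only [Fin.append_right, Fin.val_natAdd]
    exact if_congr (by omega) rfl rfl

lemma range_succ_add_eq_union (p q : ℕ) :
    range (p + q + 1) = range (p + 1) ∪ (range (q + 1)).image (p + ·) := by
  ext j
  simp only [mem_range, mem_union, mem_image]
  constructor
  · intro h
    by_cases hj : j ≤ p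
    · exact Or.inl (by omega)
    · exact Or.inr ⟨j - p, by omega, by omega⟩
  · rintro (h | ⟨t, ht, rfl⟩) <;> omega

lemma minDiff_append_s3 {p q : ℕ} (u u' : Fin p → Fin 2) (v v' : Fin q → Fin 2) :
    minDiff (Fin.append u v) (Fin.append u' v')
      = min (minDiff u u') (pSum u p - pSum u' p + minDiff v v') := by
  simp only [minDiff]
  rw [inf'_congr (by simp) (range_succ_add_eq_union p q) fun _ _ => rfl,
    inf'_union (by simp) (by simp), inf'_image]
  have shift := map_finset_inf' (OrderIso.addLeft (pSum u p - pSum u' p)) (s := range (q + 1))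
    (by simp) fun j => pSum v j - pSum v' j
  simp only [OrderIso.addLeft_apply] at shift
  rw [shift]
  congr 1
  · refine inf'_congr (by simp) rfl fun j hj => ?_
    rw [mem_range] at hj
    simp only [pSum_append, Nat.sub_eq_zero_of_le (Nat.lt_succ_iff.mp hj), pSum_zero_s3]
    ring
  · refine inf'_congr (by simp) rfl fun t _ => ?_
    simp only [Function.comp_apply, OrderIso.addLeft_apply, pSum_append, Nat.add_sub_cancel_left,
      pSum_of_le u (Nat.le_add_right p t), pSum_of_le u' (Nat.le_add_right p t)]
    ring

def profile {N : ℕ} (τ ξ : Fin N → Fin 2) : ℤ × ℤ := (minDiff τ ξ, pSum τ N - pSum ξ N)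

def profileAppend (x y : ℤ × ℤ) : ℤ × ℤ := (min x.1 (x.2 + y.1), x.2 + y.2)

lemma profile_append {p q : ℕ} (u u' : Fin p → Fin 2) (v v' : Fin q → Fin 2) :
    profile (Fin.append u v) (Fin.append u' v') = profileAppend (profile u u') (profile v v') := by
  simp only [profile, profileAppend, minDiff_append_s3, pSum_append, Nat.add_sub_cancel_left,
    pSum_of_le u (Nat.le_add_right p q), pSum_of_le u' (Nat.le_add_right p q)]
  congr 1
  ring

lemma sum_fin_append_s3 {α M : Type*} [Fintype α] [AddCommMonoid M] {p q : ℕ}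
    (F : (Fin (p + q) → α) → M) :
    ∑ ξ, F ξ = ∑ u : Fin p → α, ∑ v : Fin q → α, F (Fin.append u v) :=
  ((Fin.appendEquiv p q).sum_comp F).symm.trans (Fintype.sum_prod_type _)

lemma fTL_eq_sum_profile (a b : ℝ) {N : ℕ} (τ : Fin N → Fin 2) :
    fTL a b τ = ∑ ξ, b ^ (profile τ ξ).2 * (a * b) ^ (-(profile τ ξ).1) := rfl

lemma fTL_append_append_eq_add (a b : ℝ) {k q q₁ q₂ m : ℕ} (α : Fin k → Fin 2) (γ : Fin m → Fin 2)
    (μ : Fin q → Fin 2) (μ₁ : Fin q₁ → Fin 2) (μ₂ : Fin q₂ → Fin 2)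
    (h : ∀ g : ℤ × ℤ → ℝ, ∑ ν, g (profile μ ν) = ∑ ν, g (profile μ₁ ν) + ∑ ν, g (profile μ₂ ν)) :
    fTL a b (Fin.append (Fin.append α μ) γ)
      = fTL a b (Fin.append (Fin.append α μ₁) γ) + fTL a b (Fin.append (Fin.append α μ₂) γ) := by
  let w (x : ℤ × ℤ) : ℝ := b ^ x.2 * (a * b) ^ (-x.1)
  have split : ∀ {r} (ρ : Fin r → Fin 2), fTL a b (Fin.append (Fin.append α ρ) γ) =
      ∑ β, ∑ ν, ∑ δ, w (profileAppend (profileAppend (profile α β) (profile ρ ν)) (profile γ δ)) :=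
    fun ρ => by simp only [w, fTL_eq_sum_profile, sum_fin_append_s3, profile_append]
  rw [split, split, split, ← sum_add_distrib]
  exact sum_congr rfl fun β _ =>
    h fun x => ∑ δ, w (profileAppend (profileAppend (profile α β) x) (profile γ δ))

lemma sum_profile_one_zero (g : ℤ × ℤ → ℝ) :
    ∑ ν, g (profile ![1, 0] ν) = ∑ ν, g (profile ![1] ν) + ∑ ν, g (profile ![0] ν) := by
  have profile_cons : ∀ x y : Fin 2, profile ![1, 0] ![x, y] = profile ![1 - x] ![y] := by decide
  rw [← (finTwoArrowEquiv _).symm.sum_comp, Fintype.sum_prod_type, Fin.sum_univ_two]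
  simp only [finTwoArrowEquiv_symm_apply, profile_cons]
  rw [← (Equiv.funUnique (Fin 1) (Fin 2)).symm.sum_comp,
    ← (Equiv.funUnique (Fin 1) (Fin 2)).symm.sum_comp]
  rfl

theorem stmt3_general (a b : ℝ) (k m : ℕ)
    (α : Fin k → Fin 2) (γ : Fin m → Fin 2) :
    fTL a b (Fin.append (Fin.append α ![1, 0]) γ)
      = fTL a b (Fin.append (Fin.append α ![1]) γ)
        + fTL a b (Fin.append (Fin.append α ![0]) γ) :=
  fTL_append_append_eq_add a b α γ _ _ _ sum_profile_one_zero

theorem stmt3 (a b : ℝ) (ha : 0 < a) (hb : 0 < b) (k m : ℕ)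
    (α : Fin k → Fin 2) (γ : Fin m → Fin 2) :
    fTL a b (Fin.append (Fin.append α ![1, 0]) γ)
      = fTL a b (Fin.append (Fin.append α ![1]) γ)
        + fTL a b (Fin.append (Fin.append α ![0]) γ) :=
  stmt3_general a b k m α γ
end

section
/- For every c>0 and every N≥1, E_rw[ c^(−min_{0≤j≤N}(S_1(j)−S_2(j))) ] ≤ 1 + 2·E_rw[ c^(|S_1(N)−S_2(N)|) ], where the exponents are integers and c^m denotes the real integer power. -/
open Finset

/-!
For `c ≥ 1` the stronger bound `E[c^(−min D)] ≤ E[c^|D(N)|]` holds, where `D = S₁ − S₂`.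
Since `c^k = 1 + Σ_{m<k} (c^(m+1) − c^m)` with nonnegative increments, it suffices to compare
tails: `#{min D ≤ −m} ≤ #{|D(N)| ≥ m}` for `m ≥ 1`. This is the reflection principle. `D` moves
down by at most one per step, so it equals `−m` at its first passage time `T` below `−m`;
exchanging the two words before `T` negates `D` on `[0, T]` and shifts `D(N)` by `2m`, which maps
the walks with `D(N) > −m` to walks with `D(N) ≥ m`, injectively because `T` is also the first
passage of the image above `m`. For `c < 1` the left side is at most `1`.
-/

lemma zpow_eq_one_add_sum_range {c : ℝ} {k : ℤ} {B : ℕ} (hk : 0 ≤ k) (hkB : k ≤ B) :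
    c ^ k = 1 + ∑ m ∈ range B, if (m : ℤ) < k then c ^ (m + 1) - c ^ m else 0 := by
  lift k to ℕ using hk
  have hrange : (range B).filter (fun m : ℕ => (m : ℤ) < k) = range k := by
    ext m
    simp only [mem_filter, mem_range]
    omega
  rw [← sum_filter, hrange, sum_range_sub (fun m => c ^ m), zpow_natCast]
  ring

lemma sum_zpow_le_sum_zpow_of_card_lt_le {α : Type*} [Fintype α] {c : ℝ} (hc : 1 ≤ c)
    {f g : α → ℤ} (hf : ∀ x, 0 ≤ f x) (hg : ∀ x, 0 ≤ g x)
    (h : ∀ m : ℕ, #{x | (m : ℤ) < f x} ≤ #{x | (m : ℤ) < g x}) :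
    ∑ x, c ^ f x ≤ ∑ x, c ^ g x := by
  obtain ⟨B, hB⟩ := Finite.exists_le fun x => max (f x) (g x)
  have layer (F : α → ℤ) (hF : ∀ x, 0 ≤ F x) (hFB : ∀ x, F x ≤ B.toNat) :
      ∑ x, c ^ F x =
        Fintype.card α + ∑ m ∈ range B.toNat, (c ^ (m + 1) - c ^ m) * #{x | (m : ℤ) < F x} := by
    simp_rw [fun x => zpow_eq_one_add_sum_range (c := c) (hF x) (hFB x), sum_add_distrib]
    rw [sum_comm]
    simp only [← sum_filter, sum_const, nsmul_eq_mul, card_univ, mul_one, mul_comm]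
  rw [layer f hf fun x => by grind, layer g hg fun x => by grind]
  refine add_le_add_right (sum_le_sum fun m _ => mul_le_mul_of_nonneg_left ?_ ?_) _
  · exact_mod_cast h m
  · exact sub_nonneg.mpr (pow_le_pow_right₀ hc m.le_succ)

section FirstBelow

/-- Junk value `sInf ∅ = 0` when `D` never drops to `a`. -/
noncomputable def firstBelow (D : ℕ → ℤ) (a : ℤ) : ℕ := sInf {j | D j ≤ a}

variable {D : ℕ → ℤ} {a : ℤ}

lemma firstBelow_le {j : ℕ} (h : D j ≤ a) : firstBelow D a ≤ j := Nat.sInf_le h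

lemma lt_of_lt_firstBelow {j : ℕ} (h : j < firstBelow D a) : a < D j := by
  simpa using Nat.notMem_of_lt_sInf h

lemma firstBelow_eq {T : ℕ} (hT : D T ≤ a) (hlt : ∀ j < T, a < D j) : firstBelow D a = T := by
  refine le_antisymm (firstBelow_le hT) (not_lt.mp fun hfirst => ?_)
  have hmem : D (firstBelow D a) ≤ a := Nat.sInf_mem (s := {j | D j ≤ a}) ⟨T, hT⟩
  exact (hlt _ hfirst).not_ge hmem

lemma apply_firstBelow (hstep : ∀ j, D j - 1 ≤ D (j + 1)) (h0 : a < D 0) (h : ∃ j, D j ≤ a) :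
    D (firstBelow D a) = a := by
  have hmem : D (firstBelow D a) ≤ a := Nat.sInf_mem (s := {j | D j ≤ a}) h
  obtain ⟨k, hk⟩ : ∃ k, firstBelow D a = k + 1 :=
    Nat.exists_eq_succ_of_ne_zero fun h0' => by rw [h0'] at hmem; omega
  have hprev : a < D k := lt_of_lt_firstBelow (by omega)
  have := hstep k
  rw [hk] at hmem ⊢
  omega

end FirstBelow

section Walk

variable {N : ℕ}

lemma pSum_succ (τ : Fin N → Fin 2) (k : ℕ) :
    pSum τ (k + 1) = pSum τ k + if h : k < N then ((τ ⟨k, h⟩ : ℕ) : ℤ) else 0 := by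
  split_ifs with h
  · have hsplit : pSum τ (k + 1) =
        pSum τ k + ∑ i : Fin N, if i = ⟨k, h⟩ then ((τ i : ℕ) : ℤ) else 0 := by
      rw [pSum, pSum, ← sum_add_distrib]
      refine sum_congr rfl fun i _ => ?_
      simp only [Fin.ext_iff]
      split_ifs <;> omega
    simp [hsplit]
  · refine (sum_congr rfl fun i _ => ?_).trans (add_zero _).symm
    have := i.isLt
    simp only [show (i : ℕ) < k + 1 ↔ (i : ℕ) < k by omega]

lemma pSum_le_pSum_succ (τ : Fin N → Fin 2) (k : ℕ) : pSum τ k ≤ pSum τ (k + 1) := by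
  rw [pSum_succ]
  split_ifs <;> omega

lemma pSum_succ_le (τ : Fin N → Fin 2) (k : ℕ) : pSum τ (k + 1) ≤ pSum τ k + 1 := by
  rw [pSum_succ]
  split_ifs with h
  · have := (τ ⟨k, h⟩).isLt
    omega
  · omega

lemma pSum_piecewise (τ ξ : Fin N → Fin 2) (T j : ℕ) :
    pSum (fun i => if (i : ℕ) < T then τ i else ξ i) j
      = pSum τ (min j T) + (pSum ξ j - pSum ξ (min j T)) := by
  rw [pSum, pSum, pSum, pSum, ← sum_sub_distrib, ← sum_add_distrib]
  refine sum_congr rfl fun i _ => ?_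
  rcases Nat.lt_or_ge i j with hj | hj <;> rcases Nat.lt_or_ge i T with hT | hT <;>
    simp [hj, hT, not_lt.mpr]

abbrev WordPair (N : ℕ) := (Fin N → Fin 2) × (Fin N → Fin 2)

def walkDiff (x : WordPair N) (j : ℕ) : ℤ := pSum x.1 j - pSum x.2 j

lemma walkDiff_zero (x : WordPair N) : walkDiff x 0 = 0 := by
  simp [walkDiff, pSum]

lemma walkDiff_sub_one_le_succ (x : WordPair N) (j : ℕ) :
    walkDiff x j - 1 ≤ walkDiff x (j + 1) := by
  have := pSum_le_pSum_succ x.1 j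
  have := pSum_succ_le x.2 j
  simp only [walkDiff]
  omega

lemma minDiff_nonpos_s5 (x : WordPair N) : minDiff x.1 x.2 ≤ 0 :=
  (inf'_le _ (mem_range.mpr N.succ_pos)).trans_eq (walkDiff_zero x)

lemma exists_walkDiff_le_of_minDiff_le {x : WordPair N} {a : ℤ}
    (h : minDiff x.1 x.2 ≤ a) : ∃ j ≤ N, walkDiff x j ≤ a := by
  rw [minDiff, inf'_le_iff] at h
  obtain ⟨j, hj, hle⟩ := h
  exact ⟨j, Nat.lt_succ_iff.mp (mem_range.mp hj), hle⟩

def swapBefore {α : Type*} (T : ℕ) (x : (Fin N → α) × (Fin N → α)) :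
    (Fin N → α) × (Fin N → α) :=
  (fun i => if (i : ℕ) < T then x.2 i else x.1 i, fun i => if (i : ℕ) < T then x.1 i else x.2 i)

lemma swapBefore_swapBefore {α : Type*} (T : ℕ) (x : (Fin N → α) × (Fin N → α)) :
    swapBefore T (swapBefore T x) = x := by
  ext i <;> by_cases h : (i : ℕ) < T <;> simp [swapBefore, h]

lemma walkDiff_swapBefore (T : ℕ) (x : WordPair N) (j : ℕ) :
    walkDiff (swapBefore T x) j = walkDiff x j - 2 * walkDiff x (min j T) := by
  simp only [walkDiff, swapBefore, pSum_piecewise]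
  ring

lemma reflection_principle {x : WordPair N} {m : ℤ} (hm : 0 < m)
    (hx : ∃ j ≤ N, walkDiff x j ≤ -m) :
    walkDiff (swapBefore (firstBelow (walkDiff x) (-m)) x) N = walkDiff x N + 2 * m ∧
      firstBelow (fun j => -walkDiff (swapBefore (firstBelow (walkDiff x) (-m)) x) j) (-m) =
        firstBelow (walkDiff x) (-m) := by
  obtain ⟨j, hjN, hj⟩ := hx
  set T := firstBelow (walkDiff x) (-m)
  have hTN : T ≤ N := (firstBelow_le hj).trans hjN
  have hT : walkDiff x T = -m :=
    apply_firstBelow (walkDiff_sub_one_le_succ x) (by rw [walkDiff_zero]; omega) ⟨j, hj⟩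
  refine ⟨by rw [walkDiff_swapBefore, min_eq_right hTN, hT]; ring, firstBelow_eq ?_ ?_⟩
  · rw [walkDiff_swapBefore, min_self, hT]
    omega
  · intro k hk
    have := lt_of_lt_firstBelow hk
    rw [walkDiff_swapBefore, min_eq_left hk.le]
    omega

theorem card_minDiff_le_le_card_abs_walkDiff {m : ℤ} (hm : 0 < m) :
    #{x : WordPair N | minDiff x.1 x.2 ≤ -m}
      ≤ #{x : WordPair N | m ≤ |walkDiff x N|} := by
  let reflect (x : WordPair N) : WordPair N :=
    if walkDiff x N ≤ -m then x else swapBefore (firstBelow (walkDiff x) (-m)) x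
  let unreflect (y : WordPair N) : WordPair N :=
    if walkDiff y N ≤ -m then y else swapBefore (firstBelow (fun j => -walkDiff y j) (-m)) y
  refine card_le_card_of_injOn reflect (fun x hx => ?_) (Set.LeftInvOn.injOn (f₁' := unreflect)
    fun x hx => ?_)
  all_goals
    simp only [coe_filter, mem_univ, true_and, Set.mem_ofPred_eq] at hx ⊢
    obtain ⟨hend, hfirst⟩ := reflection_principle hm (exists_walkDiff_le_of_minDiff_le hx)
    by_cases hxN : walkDiff x N ≤ -m
  · simp only [reflect, if_pos hxN]
    exact le_abs.mpr (Or.inr (by omega))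
  · simp only [reflect, if_neg hxN, hend]
    exact le_abs.mpr (Or.inl (by omega))
  · simp only [reflect, unreflect, if_pos hxN]
  · simp only [reflect, unreflect, if_neg hxN, hend, hfirst, swapBefore_swapBefore]
    rw [if_neg (by omega)]

lemma sum_zpow_neg_minDiff_le {c : ℝ} (hc : 1 ≤ c) :
    ∑ x : WordPair N, c ^ (-minDiff x.1 x.2) ≤ ∑ x : WordPair N, c ^ |walkDiff x N| := by
  refine sum_zpow_le_sum_zpow_of_card_lt_le hc (fun x => by linarith [minDiff_nonpos_s5 x])
    (fun _ => abs_nonneg _) fun m => ?_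
  have hlevel := card_minDiff_le_le_card_abs_walkDiff (N := N) (m := m + 1) (by omega)
  convert hlevel using 3 <;> omega

lemma sum_zpow_neg_minDiff_le_card {c : ℝ} (hc₀ : 0 < c) (hc₁ : c ≤ 1) :
    ∑ x : WordPair N, c ^ (-minDiff x.1 x.2) ≤ 4 ^ N := by
  calc ∑ x : WordPair N, c ^ (-minDiff x.1 x.2)
      ≤ ∑ _x : WordPair N, (1 : ℝ) :=
        sum_le_sum fun x _ => zpow_le_one₀ hc₀ hc₁ (by linarith [minDiff_nonpos_s5 x])
    _ = 4 ^ N := by simp [Fintype.card_prod, ← mul_pow]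

end Walk

theorem stmt5_general (c : ℝ) (hc : 0 < c) (N : ℕ) :
    (∑ ξ : Fin N → Fin 2, ∑ η : Fin N → Fin 2, c ^ (-(minDiff ξ η))) / 4 ^ N
      ≤ 1 + 2 * ((∑ ξ : Fin N → Fin 2, ∑ η : Fin N → Fin 2,
          c ^ |pSum ξ N - pSum η N|) / 4 ^ N) := by
  rw [← Fintype.sum_prod_type', ← Fintype.sum_prod_type']
  change (∑ x : WordPair N, c ^ (-minDiff x.1 x.2)) / 4 ^ N
    ≤ 1 + 2 * ((∑ x : WordPair N, c ^ |walkDiff x N|) / 4 ^ N)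
  have h4 : (0 : ℝ) < 4 ^ N := by positivity
  have hright : 0 ≤ (∑ x : WordPair N, c ^ |walkDiff x N|) / 4 ^ N := by positivity
  rcases le_or_gt 1 c with hc₁ | hc₁
  · have := div_le_div_of_nonneg_right (sum_zpow_neg_minDiff_le (N := N) hc₁) h4.le
    linarith
  · have := (div_le_one h4).mpr (sum_zpow_neg_minDiff_le_card (N := N) hc hc₁.le)
    linarith

/-- Lévy–Ottaviani-type bound: `E_rw[c^(−min_{0≤j≤N}(S₁(j)−S₂(j)))] ≤ 1 + 2 E_rw[c^|S₁(N)−S₂(N)|]`,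
where the expectation is the uniform average over all pairs of words in `{0,1}^N`. -/
theorem stmt5 (c : ℝ) (hc : 0 < c) (N : ℕ) (hN : 1 ≤ N) :
    (∑ ξ : Fin N → Fin 2, ∑ η : Fin N → Fin 2, c ^ (-(minDiff ξ η))) / 4 ^ N
      ≤ 1 + 2 * ((∑ ξ : Fin N → Fin 2, ∑ η : Fin N → Fin 2,
          c ^ |pSum ξ N - pSum η N|) / 4 ^ N) :=
  stmt5_general c hc N
end

section
/- Let φ,ψ:[0,1]→ℝ be continuous functions and let A={x∈[0,1] : φ(x)=min_{[0,1]}φ}. Then lim_{τ→0⁺} ( min_{x∈[0,1]}(φ(x)−τ·ψ(x)) − min_{x∈[0,1]}φ(x) ) / τ = − max_{x∈A} ψ(x); equivalently, min_{[0,1]}(φ−τψ) = min_{[0,1]}φ − τ·max_A ψ + o(τ) as τ→0⁺. -/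
/-!
Write `m = min_K φ`, `A = {φ = m}` and `M = max_A ψ`. Evaluating `φ - τψ` at a point of `A` where
`ψ = M` gives `min_K (φ - τψ) ≤ m - τM` for every `τ`. Conversely, fix `ε > 0`: where
`ψ < M + ε` one has `φ - τψ ≥ m - τ(M + ε)` for `τ > 0`, while the compact set where
`ψ ≥ M + ε` misses `A`, so `φ - m` has a positive minimum there that beats the bounded term
`τ(ψ - M - ε)` once `τ` is small. Hence `-M - ε ≤ (min_K (φ - τψ) - m)/τ ≤ -M` for small `τ > 0`.
-/

open Set Filter Topology

theorem tendsto_sub_div_nhdsGT_of_bounds {g : ℝ → ℝ} {m M : ℝ}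
    (hup : ∀ᶠ τ in 𝓝[>] 0, g τ ≤ m - τ * M)
    (hlow : ∀ ε > 0, ∀ᶠ τ in 𝓝[>] 0, m - τ * (M + ε) ≤ g τ) :
    Tendsto (fun τ => (g τ - m) / τ) (𝓝[>] 0) (𝓝 (-M)) := by
  refine tendsto_order.2 ⟨fun a ha => ?_, fun b hb => ?_⟩
  · filter_upwards [hlow ((-M - a) / 2) (by linarith), self_mem_nhdsWithin]
      with τ hτ (hτ0 : 0 < τ)
    rw [lt_div_iff₀ hτ0]
    nlinarith
  · filter_upwards [hup, self_mem_nhdsWithin] with τ hτ (hτ0 : 0 < τ)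
    rw [div_lt_iff₀ hτ0]
    nlinarith

section Perturbation

variable {X : Type*} [TopologicalSpace X] {K : Set X} {φ ψ : X → ℝ}

theorem sInf_image_sub_mul_le (hK : IsCompact K) (hφ : ContinuousOn φ K) (hψ : ContinuousOn ψ K)
    {y : X} (hy : y ∈ K) (τ : ℝ) :
    sInf ((fun x => φ x - τ * ψ x) '' K) ≤ φ y - τ * ψ y :=
  csInf_le (hK.bddBelow_image (hφ.sub (continuousOn_const.mul hψ))) (mem_image_of_mem _ hy)

theorem eventually_forall_sub_mul_le (hK : IsCompact K) (hφ : ContinuousOn φ K)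
    (hψ : ContinuousOn ψ K) {m M : ℝ} (hm : ∀ x ∈ K, m ≤ φ x)
    (hM : ∀ x ∈ K, φ x = m → ψ x ≤ M) {ε : ℝ} (hε : 0 < ε) :
    ∀ᶠ τ in 𝓝[>] 0, ∀ x ∈ K, m - τ * (M + ε) ≤ φ x - τ * ψ x := by
  set C := K ∩ ψ ⁻¹' Ici (M + ε)
  have hC : IsCompact C := hψ.upperSemicontinuousOn.isCompact_inter_preimage_Ici hK _
  have hφC : ∀ x ∈ C, m < φ x := fun x ⟨hxK, (hxψ : M + ε ≤ ψ x)⟩ =>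
    (hm x hxK).lt_of_ne fun h => by linarith [hM x hxK h.symm]
  obtain ⟨m', hmm', hm'⟩ := hC.exists_forall_le' (hφ.mono inter_subset_left) hφC
  obtain ⟨B, hB⟩ := hK.bddAbove_image hψ
  have hsmall : ∀ᶠ τ in 𝓝 (0 : ℝ), τ * (B - (M + ε)) < m' - m := by
    have : Tendsto (fun τ : ℝ => τ * (B - (M + ε))) (𝓝 0) (𝓝 0) :=
      (continuous_id.mul continuous_const).tendsto' 0 0 (zero_mul _)
    exact this.eventually (gt_mem_nhds (by linarith))
  filter_upwards [nhdsWithin_le_nhds hsmall, self_mem_nhdsWithin] with τ hτ (hτ0 : 0 < τ) x hx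
  by_cases hxψ : M + ε ≤ ψ x
  · have hψB : ψ x ≤ B := hB (mem_image_of_mem ψ hx)
    nlinarith [hm' x ⟨hx, hxψ⟩]
  · nlinarith [hm x hx]

theorem tendsto_sInf_image_sub_mul_div (hK : IsCompact K) (hne : K.Nonempty)
    (hφ : ContinuousOn φ K) (hψ : ContinuousOn ψ K) :
    Tendsto (fun τ => (sInf ((fun x => φ x - τ * ψ x) '' K) - sInf (φ '' K)) / τ) (𝓝[>] 0)
      (𝓝 (-sSup (ψ '' {x ∈ K | φ x = sInf (φ '' K)}))) := by
  obtain ⟨x₀, hx₀, hφx₀, hm⟩ := hK.exists_sInf_image_eq_and_le hne hφ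
  set m := sInf (φ '' K)
  set A := {x ∈ K | φ x = m}
  have hA : IsCompact A := by
    convert hφ.lowerSemicontinuousOn.isCompact_inter_preimage_Iic hK m using 1
    ext x
    exact and_congr_right fun hx => ⟨le_of_eq, fun h => h.antisymm (hφx₀ ▸ hm x hx)⟩
  obtain ⟨y₀, ⟨hy₀K, hφy₀⟩, hψy₀, hM⟩ :=
    hA.exists_sSup_image_eq_and_ge ⟨x₀, hx₀, hφx₀.symm⟩ (hψ.mono (sep_subset _ _))
  refine tendsto_sub_div_nhdsGT_of_bounds (Eventually.of_forall fun τ => ?_) fun ε hε => ?_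
  · simpa [hφy₀, hψy₀] using sInf_image_sub_mul_le hK hφ hψ hy₀K τ
  · filter_upwards [eventually_forall_sub_mul_le hK hφ hψ (fun x hx => hφx₀ ▸ hm x hx)
      (fun x hx h => hψy₀ ▸ hM x ⟨hx, h⟩) hε] with τ hτ
    exact le_csInf (hne.image _) (forall_mem_image.2 hτ)

end Perturbation

/-- Right-derivative of the minimum: if `φ, ψ` are continuous on `[0,1]` and
`A = {x ∈ [0,1] : φ(x) = min φ}`, then
`(min_{[0,1]}(φ − τψ) − min_{[0,1]} φ)/τ → −max_A ψ` as `τ → 0⁺`. -/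
theorem stmt7 (φ ψ : ℝ → ℝ) (hφ : ContinuousOn φ (Set.Icc 0 1))
    (hψ : ContinuousOn ψ (Set.Icc 0 1)) :
    Filter.Tendsto
      (fun τ : ℝ =>
        (sInf ((fun x => φ x - τ * ψ x) '' Set.Icc 0 1) - sInf (φ '' Set.Icc 0 1)) / τ)
      (nhdsWithin 0 (Set.Ioi 0))
      (nhds (-sSup (ψ '' {x ∈ Set.Icc (0:ℝ) 1 | φ x = sInf (φ '' Set.Icc 0 1)}))) :=
  tendsto_sInf_image_sub_mul_div isCompact_Icc (nonempty_Icc.2 zero_le_one) hφ hψ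
end

section
/- Fix a,b>0 with ab<1 (so that a/(1+a) < 1/(1+b)). Let ρ:[0,1]→[0,1] be nondecreasing and right-continuous, and let f(x)=∫_0^x ρ(t)dt. Define G_*(x)=min(max(ρ(x), a/(1+a)), 1/(1+b)) and g_*(x)=∫_0^x G_*(t)dt. Then J*(f,g_*)=J_*(f,G_*). -/
open Finset

/-- `h(x) = x log x + (1−x) log(1−x)` (with `0·log 0 = 0`, as `Real.log 0 = 0`). -/
noncomputable def hEnt (x : ℝ) : ℝ := x * Real.log x + (1 - x) * Real.log (1 - x)

/-- `J*(f,g) = ∫₀¹ h(σ) + log(ab)·min_{[0,1]}(f−g) − log(b)·(f(1)−g(1))`, where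
`g(x) = ∫₀ˣ σ(t) dt` is encoded by its density `σ`. -/
noncomputable def Jstar (a b : ℝ) (f σ : ℝ → ℝ) : ℝ :=
  (∫ x in (0:ℝ)..1, hEnt (σ x))
    + Real.log (a * b) * sInf ((fun x => f x - ∫ t in (0:ℝ)..x, σ t) '' Set.Icc 0 1)
    - Real.log b * (f 1 - ∫ t in (0:ℝ)..1, σ t)

/-- `J_*(f,G) = ∫₀¹ [ρ log G + (1−ρ) log(1−G)]`, where `f(x) = ∫₀ˣ ρ(t) dt`. -/
noncomputable def Jlow (ρ G : ℝ → ℝ) : ℝ :=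
  ∫ x in (0:ℝ)..1, (ρ x * Real.log (G x) + (1 - ρ x) * Real.log (1 - G x))
/-
Write `G = min (max ρ α) β` with `α = a/(1+a)`, `β = 1/(1+b)`, and let `p = (α - ρ)⁺`, `q = (ρ - β)⁺`
be the parts of `ρ` cut off below and above, so that `ρ - G = q - p`. Pointwise,
`h(G) = ρ log G + (1-ρ) log (1-G) + p log a + q log b`, because `log α - log (1-α) = log a` and
`log (1-β) - log β = log b`. Since `ρ` is nondecreasing there is a point `c` with `q = 0` before `c`
and `p = 0` after it, so `f - g = ∫₀ˣ (q - p)` attains its minimum `-∫₀¹ p` at `c`. Substituting,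
all the `p` and `q` terms in `J*(f, g)` cancel.
-/

open Set MeasureTheory intervalIntegral

lemma sub_min_max_eq {α β : ℝ} (r : ℝ) (hαβ : α ≤ β) :
    r - min (max r α) β = max (r - β) 0 - max (α - r) 0 := by
  rcases le_total r α with h | h
  · rw [max_eq_right h, min_eq_left hαβ, max_eq_right (by linarith), max_eq_left (by linarith)]
    ring
  · rw [max_eq_left h]
    rcases le_total r β with h2 | h2
    · rw [min_eq_left h2, max_eq_right (by linarith), max_eq_right (by linarith)]; ring
    · rw [min_eq_right h2, max_eq_left (by linarith), max_eq_right (by linarith)]; ring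

lemma hEnt_min_max {α β : ℝ} (r : ℝ) (hαβ : α ≤ β) :
    hEnt (min (max r α) β)
      = r * Real.log (min (max r α) β) + (1 - r) * Real.log (1 - min (max r α) β)
        + max (α - r) 0 * (Real.log α - Real.log (1 - α))
        + max (r - β) 0 * (Real.log (1 - β) - Real.log β) := by
  unfold hEnt
  rcases le_total r α with h | h
  · rw [max_eq_right h, min_eq_left hαβ, max_eq_left (by linarith), max_eq_right (by linarith)]
    ring
  · rw [max_eq_left h]
    rcases le_total r β with h2 | h2
    · rw [min_eq_left h2, max_eq_right (by linarith), max_eq_right (by linarith)]; ring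
    · rw [min_eq_right h2, max_eq_right (by linarith), max_eq_left (by linarith)]; ring

lemma hEnt_eq_neg_binEntropy (x : ℝ) : hEnt x = -Real.binEntropy x := by
  simp only [hEnt, Real.binEntropy, Real.log_inv]
  ring

lemma abs_hEnt_le_log_two {x : ℝ} (hx₀ : 0 ≤ x) (hx₁ : x ≤ 1) : |hEnt x| ≤ Real.log 2 := by
  rw [hEnt_eq_neg_binEntropy, abs_neg, abs_of_nonneg (Real.binEntropy_nonneg hx₀ hx₁)]
  exact Real.binEntropy_le_log_two

lemma IntervalIntegrable.hEnt_comp {g : ℝ → ℝ} {u v : ℝ} (hg : IntervalIntegrable g volume u v)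
    (hg01 : ∀ x, g x ∈ Icc (0 : ℝ) 1) : IntervalIntegrable (fun x => hEnt (g x)) volume u v := by
  have hcont : Continuous hEnt := by
    rw [funext hEnt_eq_neg_binEntropy]
    fun_prop
  refine (intervalIntegrable_const (c := Real.log 2)).mono_fun'
    (hcont.comp_aestronglyMeasurable hg.aestronglyMeasurable_restrict_uIoc) ?_
  exact Filter.Eventually.of_forall fun x => abs_hEnt_le_log_two (hg01 x).1 (hg01 x).2

lemma Real.log_div_one_add_sub_log_one_sub {c : ℝ} (hc : 0 < c) :
    Real.log (c / (1 + c)) - Real.log (1 - c / (1 + c)) = Real.log c := by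
  have h1c : 0 < 1 + c := by positivity
  have hsub : 1 - c / (1 + c) = 1 / (1 + c) := by field_simp; ring
  rw [hsub, ← Real.log_div (by positivity) (by positivity)]
  congr 1
  field_simp

lemma MonotoneOn.exists_forall_lt_forall_le {α β : Type*} [ConditionallyCompleteLinearOrder α]
    [LinearOrder β] {ρ : α → β} {u v : α} (huv : u ≤ v) (hρ : MonotoneOn ρ (Icc u v)) (m : β) :
    ∃ c ∈ Icc u v, (∀ t ∈ Ico u c, ρ t < m) ∧ ∀ t ∈ Ioc c v, m ≤ ρ t := by
  set S := {x ∈ Icc u v | x = u ∨ ρ x < m}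
  have huS : u ∈ S := ⟨⟨le_rfl, huv⟩, Or.inl rfl⟩
  have hSbdd : BddAbove S := ⟨v, fun x hx => hx.1.2⟩
  have hu : u ≤ sSup S := le_csSup hSbdd huS
  refine ⟨sSup S, ⟨hu, csSup_le ⟨u, huS⟩ fun x hx => hx.1.2⟩, fun t ht => ?_, fun t ht => ?_⟩
  · obtain ⟨y, hyS, hty⟩ := exists_lt_of_lt_csSup ⟨u, huS⟩ ht.2
    exact (hρ ⟨ht.1, hty.le.trans hyS.1.2⟩ hyS.1 hty.le).trans_lt
      (hyS.2.resolve_left (ht.1.trans_lt hty).ne')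
  · by_contra! hlt
    exact (le_csSup hSbdd ⟨⟨hu.trans ht.1.le, ht.2⟩, Or.inr hlt⟩).not_gt ht.1

lemma isLeast_image_integral_sub {p q : ℝ → ℝ} {u v c : ℝ}
    (hp : IntervalIntegrable p volume u v)
    (hp₀ : ∀ t ∈ Icc u v, 0 ≤ p t) (hq₀ : ∀ t ∈ Icc u v, 0 ≤ q t) (hc : c ∈ Icc u v)
    (hqc : ∀ t ∈ Ioo u c, q t = 0) (hpc : ∀ t ∈ Ioc c v, p t = 0) :
    IsLeast ((fun x => (∫ t in u..x, q t) - ∫ t in u..x, p t) '' Icc u v)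
      (-∫ t in u..v, p t) := by
  have hsplit : ∀ x ∈ Icc u v, (∫ t in u..x, p t) + (∫ t in x..v, p t) = ∫ t in u..v, p t :=
    fun x hx => integral_add_adjacent_intervals
      (hp.mono_set (uIcc_subset_uIcc_left (Icc_subset_uIcc hx)))
      (hp.mono_set (uIcc_subset_uIcc_right (Icc_subset_uIcc hx)))
  refine ⟨⟨c, hc, ?_⟩, ?_⟩
  · have hq_zero : ∫ t in u..c, q t = 0 := by
      rw [integral_of_le hc.1, integral_Ioc_eq_integral_Ioo,
        setIntegral_congr_fun measurableSet_Ioo hqc, integral_zero]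
    have hp_zero : ∫ t in c..v, p t = 0 := by
      rw [integral_of_le hc.2, setIntegral_congr_fun measurableSet_Ioc hpc, integral_zero]
    linarith [hsplit c hc]
  · rintro _ ⟨x, hx, rfl⟩
    have hq_nonneg : 0 ≤ ∫ t in u..x, q t :=
      integral_nonneg hx.1 fun t ht => hq₀ t ⟨ht.1, ht.2.trans hx.2⟩
    have hp_nonneg : 0 ≤ ∫ t in x..v, p t :=
      integral_nonneg hx.2 fun t ht => hp₀ t ⟨hx.1.trans ht.1, ht.2⟩
    linarith [hsplit x hx]

section Clamp

variable {α β u v : ℝ} {ρ : ℝ → ℝ}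

lemma MonotoneOn.intervalIntegrable_of_le {f : ℝ → ℝ} (huv : u ≤ v)
    (hf : MonotoneOn f (Icc u v)) : IntervalIntegrable f volume u v := by
  rw [← Set.uIcc_of_le huv] at hf
  exact hf.intervalIntegrable

lemma AntitoneOn.intervalIntegrable_of_le {f : ℝ → ℝ} (huv : u ≤ v)
    (hf : AntitoneOn f (Icc u v)) : IntervalIntegrable f volume u v := by
  rw [← Set.uIcc_of_le huv] at hf
  exact hf.intervalIntegrable

lemma MonotoneOn.intervalIntegrable_monotone_comp {φ : ℝ → ℝ} (huv : u ≤ v)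
    (hρ : MonotoneOn ρ (Icc u v)) (hφ : Monotone φ) :
    IntervalIntegrable (fun x => φ (ρ x)) volume u v :=
  (hφ.comp_monotoneOn hρ).intervalIntegrable_of_le huv

lemma MonotoneOn.intervalIntegrable_antitone_comp {φ : ℝ → ℝ} (huv : u ≤ v)
    (hρ : MonotoneOn ρ (Icc u v)) (hφ : Antitone φ) :
    IntervalIntegrable (fun x => φ (ρ x)) volume u v :=
  (hφ.comp_monotoneOn hρ).intervalIntegrable_of_le huv

lemma monotone_min_max (α β : ℝ) : Monotone fun r : ℝ => min (max r α) β :=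
  fun _ _ h => min_le_min_right _ (max_le_max_right _ h)

lemma monotone_max_sub_zero (β : ℝ) : Monotone fun r : ℝ => max (r - β) 0 :=
  fun _ _ h => max_le_max_right _ (sub_le_sub_right h _)

lemma antitone_max_sub_zero (α : ℝ) : Antitone fun r : ℝ => max (α - r) 0 :=
  fun _ _ h => max_le_max_right _ (sub_le_sub_left h _)

lemma integral_sub_integral_min_max (huv : u ≤ v) (hρ : MonotoneOn ρ (Icc u v)) (hαβ : α ≤ β) :
    (∫ t in u..v, ρ t) - (∫ t in u..v, min (max (ρ t) α) β)
      = (∫ t in u..v, max (ρ t - β) 0) - ∫ t in u..v, max (α - ρ t) 0 := by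
  rw [← integral_sub (hρ.intervalIntegrable_of_le huv)
      (hρ.intervalIntegrable_monotone_comp huv (monotone_min_max α β)),
    ← integral_sub (hρ.intervalIntegrable_monotone_comp huv (monotone_max_sub_zero β))
      (hρ.intervalIntegrable_antitone_comp huv (antitone_max_sub_zero α))]
  exact integral_congr fun t _ => sub_min_max_eq (ρ t) hαβ

lemma isLeast_integral_sub_integral_min_max (huv : u ≤ v) (hρ : MonotoneOn ρ (Icc u v))
    (hαβ : α ≤ β) :
    IsLeast ((fun x => (∫ t in u..x, ρ t) - ∫ t in u..x, min (max (ρ t) α) β) '' Icc u v)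
      (-∫ t in u..v, max (α - ρ t) 0) := by
  obtain ⟨c, hc, hbelow, habove⟩ := hρ.exists_forall_lt_forall_le huv α
  rw [image_congr fun x hx =>
    integral_sub_integral_min_max hx.1 (hρ.mono (Icc_subset_Icc_right hx.2)) hαβ]
  refine isLeast_image_integral_sub (hρ.intervalIntegrable_antitone_comp huv
    (antitone_max_sub_zero α)) (fun t _ => le_max_right _ _) (fun t _ => le_max_right _ _) hc
    (fun t ht => max_eq_right ?_) (fun t ht => max_eq_right ?_)
  · linarith [hbelow t (Ioo_subset_Ico_self ht)]
  · linarith [habove t ht]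

lemma integral_mul_log_min_max (huv : u ≤ v) (hρ : MonotoneOn ρ (Icc u v)) (hα₀ : 0 ≤ α)
    (hαβ : α ≤ β) (hβ₁ : β ≤ 1) :
    (∫ x in u..v, (ρ x * Real.log (min (max (ρ x) α) β)
        + (1 - ρ x) * Real.log (1 - min (max (ρ x) α) β)))
      = (∫ x in u..v, hEnt (min (max (ρ x) α) β))
        - (Real.log α - Real.log (1 - α)) * (∫ x in u..v, max (α - ρ x) 0)
        - (Real.log (1 - β) - Real.log β) * ∫ x in u..v, max (ρ x - β) 0 := by
  have hG := hρ.intervalIntegrable_monotone_comp huv (monotone_min_max α β)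
  have hp := (hρ.intervalIntegrable_antitone_comp huv (antitone_max_sub_zero α)).const_mul
    (Real.log α - Real.log (1 - α))
  have hq := (hρ.intervalIntegrable_monotone_comp huv (monotone_max_sub_zero β)).const_mul
    (Real.log (1 - β) - Real.log β)
  have hHG := hG.hEnt_comp fun x =>
    ⟨hα₀.trans (le_min (le_max_right _ _) hαβ), (min_le_right _ _).trans hβ₁⟩
  rw [← intervalIntegral.integral_const_mul, ← intervalIntegral.integral_const_mul,
    ← integral_sub hHG hp, ← integral_sub (hHG.sub hp) hq]
  refine integral_congr fun x _ => ?_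
  simp only [hEnt_min_max (ρ x) hαβ]
  ring

end Clamp

theorem stmt8_general (a b : ℝ) (ha : 0 < a) (hb : 0 < b) (hab : a * b < 1)
    (ρ : ℝ → ℝ) (hmono : MonotoneOn ρ (Set.Icc 0 1)) :
    Jstar a b (fun x => ∫ t in (0:ℝ)..x, ρ t)
        (fun x => min (max (ρ x) (a / (1 + a))) (1 / (1 + b)))
      = Jlow ρ (fun x => min (max (ρ x) (a / (1 + a))) (1 / (1 + b))) := by
  set α := a / (1 + a) with hα
  set β := 1 / (1 + b) with hβ
  have hαβ : α ≤ β := by rw [hα, hβ, div_le_div_iff₀ (by positivity) (by positivity)]; nlinarith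
  have hlog_a : Real.log α - Real.log (1 - α) = Real.log a :=
    Real.log_div_one_add_sub_log_one_sub ha
  have hlog_b : Real.log (1 - β) - Real.log β = Real.log b := by
    have hβ' : β = 1 - b / (1 + b) := by rw [hβ]; field_simp; ring
    rw [hβ', sub_sub_cancel]
    exact Real.log_div_one_add_sub_log_one_sub hb
  simp only [Jstar, Jlow]
  rw [(isLeast_integral_sub_integral_min_max zero_le_one hmono hαβ).csInf_eq,
    integral_sub_integral_min_max zero_le_one hmono hαβ,
    integral_mul_log_min_max zero_le_one hmono (by positivity) hαβ
      (div_le_one_of_le₀ (by linarith) (by linarith)),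
    hlog_a, hlog_b, Real.log_mul ha.ne' hb.ne']
  ring

theorem stmt8 (a b : ℝ) (ha : 0 < a) (hb : 0 < b) (hab : a * b < 1)
    (ρ : ℝ → ℝ) (hmono : MonotoneOn ρ (Set.Icc 0 1))
    (hrange : ∀ x ∈ Set.Icc (0:ℝ) 1, ρ x ∈ Set.Icc (0:ℝ) 1)
    (hrc : ∀ x ∈ Set.Ico (0:ℝ) 1, ContinuousWithinAt ρ (Set.Ici x) x) :
    Jstar a b (fun x => ∫ t in (0:ℝ)..x, ρ t)
        (fun x => min (max (ρ x) (a / (1 + a))) (1 / (1 + b)))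
      = Jlow ρ (fun x => min (max (ρ x) (a / (1 + a))) (1 / (1 + b))) :=
  stmt8_general a b ha hb hab ρ hmono
end

section
/- Let a,b>0 with ab≥1 and let y∈(0,1). Then the minimum over F∈[0,y] and G∈[F, F+1−y] of the quantity y·h(F/y) − F·log(ab) + (1−y)·h((G−F)/(1−y)) + G·log b equals y·log(1/(1+a)) + (1−y)·log(b/(1+b)), and this minimum is attained at F = a·y/(1+a) and G = F + (1−y)/(1+b). -/
open Real Set

lemma sub_le_mul_log_sub_mul_log {p r : ℝ} (hp : 0 ≤ p) (hr : 0 < r) :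
    p - r ≤ p * log p - p * log r := by
  rcases hp.eq_or_lt with rfl | hp
  · simpa using hr.le
  have key := mul_le_mul_of_nonneg_left (self_sub_one_le_mul_log (div_pos hp hr).le) hr.le
  rw [log_div hp.ne' hr.ne'] at key
  field_simp at key
  linarith

lemma mul_log_add_mul_log_one_sub_le_hEnt {p r : ℝ} (hp : p ∈ Icc (0 : ℝ) 1)
    (hr : r ∈ Ioo (0 : ℝ) 1) :
    p * log r + (1 - p) * log (1 - r) ≤ hEnt p := by
  have h₁ := sub_le_mul_log_sub_mul_log hp.1 hr.1
  have h₂ := sub_le_mul_log_sub_mul_log (sub_nonneg.2 hp.2) (sub_pos.2 hr.2)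
  rw [hEnt]
  linarith

lemma hEnt_one_sub (x : ℝ) : hEnt (1 - x) = hEnt x := by
  rw [hEnt, hEnt, sub_sub_cancel]
  ring

lemma log_div_one_add {t : ℝ} (ht : 0 < t) : log (t / (1 + t)) = log t - log (1 + t) :=
  log_div ht.ne' (by positivity)

lemma log_one_sub_div_one_add {t : ℝ} (ht : 0 < t) : log (1 - t / (1 + t)) = -log (1 + t) := by
  rw [← log_inv]
  congr 1
  field_simp
  ring

lemma neg_log_one_add_le_hEnt_sub_mul_log {t p : ℝ} (ht : 0 < t) (hp : p ∈ Icc (0 : ℝ) 1) :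
    -log (1 + t) ≤ hEnt p - p * log t := by
  have hr : t / (1 + t) ∈ Ioo (0 : ℝ) 1 :=
    ⟨by positivity, (div_lt_one (by positivity)).2 (by linarith)⟩
  have gibbs := mul_log_add_mul_log_one_sub_le_hEnt hp hr
  rw [log_div_one_add ht, log_one_sub_div_one_add ht] at gibbs
  linarith

lemma hEnt_div_one_add_sub_mul_log {t : ℝ} (ht : 0 < t) :
    hEnt (t / (1 + t)) - t / (1 + t) * log t = -log (1 + t) := by
  rw [hEnt, log_div_one_add ht, log_one_sub_div_one_add ht]
  ring

lemma log_div_one_add_le_hEnt_add_mul_log {t q : ℝ} (ht : 0 < t) (hq : q ∈ Icc (0 : ℝ) 1) :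
    log (t / (1 + t)) ≤ hEnt q + q * log t := by
  have h := neg_log_one_add_le_hEnt_sub_mul_log (p := 1 - q) ht
    ⟨sub_nonneg.2 hq.2, sub_le_self _ hq.1⟩
  rw [hEnt_one_sub] at h
  rw [log_div_one_add ht]
  linarith

lemma hEnt_one_div_one_add_add_mul_log {t : ℝ} (ht : 0 < t) :
    hEnt (1 / (1 + t)) + 1 / (1 + t) * log t = log (t / (1 + t)) := by
  have h1 : 1 / (1 + t) = 1 - t / (1 + t) := by field_simp; ring
  rw [h1, hEnt_one_sub, log_div_one_add ht]
  linarith [hEnt_div_one_add_sub_mul_log ht]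

lemma hEnt_objective_eq {a b y : ℝ} (F G : ℝ) (ha : a ≠ 0) (hb : b ≠ 0) (hy₀ : y ≠ 0)
    (hy₁ : 1 - y ≠ 0) :
    y * hEnt (F / y) - F * log (a * b) + (1 - y) * hEnt ((G - F) / (1 - y)) + G * log b =
      y * (hEnt (F / y) - F / y * log a)
        + (1 - y) * (hEnt ((G - F) / (1 - y)) + (G - F) / (1 - y) * log b) := by
  rw [log_mul ha hb]
  field_simp
  ring

theorem stmt11_general (a b : ℝ) (ha : 0 < a) (hb : 0 < b)
    (y : ℝ) (hy : y ∈ Set.Ioo (0:ℝ) 1) :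
    IsLeast
      {v : ℝ | ∃ F G : ℝ, F ∈ Set.Icc 0 y ∧ G ∈ Set.Icc F (F + 1 - y) ∧
        v = y * hEnt (F / y) - F * Real.log (a * b)
            + (1 - y) * hEnt ((G - F) / (1 - y)) + G * Real.log b}
      (y * Real.log (1 / (1 + a)) + (1 - y) * Real.log (b / (1 + b)))
    ∧ (y * hEnt ((a * y / (1 + a)) / y) - (a * y / (1 + a)) * Real.log (a * b)
        + (1 - y) * hEnt (((a * y / (1 + a) + (1 - y) / (1 + b)) - a * y / (1 + a)) / (1 - y))
        + (a * y / (1 + a) + (1 - y) / (1 + b)) * Real.log b)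
      = y * Real.log (1 / (1 + a)) + (1 - y) * Real.log (b / (1 + b)) := by
  obtain ⟨hy₀, hy₁⟩ := hy
  have h1y : 0 < 1 - y := sub_pos.2 hy₁
  have hp : a * y / (1 + a) / y = a / (1 + a) := by field_simp
  have hq : (a * y / (1 + a) + (1 - y) / (1 + b) - a * y / (1 + a)) / (1 - y) = 1 / (1 + b) := by
    field_simp
    ring
  rw [one_div (1 + a), log_inv]
  have hval : y * hEnt (a * y / (1 + a) / y) - a * y / (1 + a) * log (a * b)
      + (1 - y) * hEnt ((a * y / (1 + a) + (1 - y) / (1 + b) - a * y / (1 + a)) / (1 - y))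
      + (a * y / (1 + a) + (1 - y) / (1 + b)) * log b
      = y * -log (1 + a) + (1 - y) * log (b / (1 + b)) := by
    rw [hEnt_objective_eq _ _ ha.ne' hb.ne' hy₀.ne' h1y.ne', hp, hq,
      hEnt_div_one_add_sub_mul_log ha, hEnt_one_div_one_add_add_mul_log hb]
  refine ⟨⟨⟨_, _, ⟨by positivity, ?_⟩, ⟨?_, ?_⟩, hval.symm⟩, ?_⟩, hval⟩
  · rw [div_le_iff₀ (by positivity)]; nlinarith
  · linarith [div_nonneg h1y.le (by positivity : (0 : ℝ) ≤ 1 + b)]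
  · rw [add_sub_assoc, add_le_add_iff_left, div_le_iff₀ (by positivity)]; nlinarith
  · rintro v ⟨F, G, ⟨hF₀, hF₁⟩, ⟨hG₀, hG₁⟩, rfl⟩
    rw [hEnt_objective_eq _ _ ha.ne' hb.ne' hy₀.ne' h1y.ne']
    have hp : F / y ∈ Icc (0 : ℝ) 1 := ⟨by positivity, (div_le_one hy₀).2 hF₁⟩
    have hq : (G - F) / (1 - y) ∈ Icc (0 : ℝ) 1 :=
      ⟨div_nonneg (by linarith) h1y.le, (div_le_one h1y).2 (by linarith)⟩
    gcongr
    · exact neg_log_one_add_le_hEnt_sub_mul_log ha hp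
    · exact log_div_one_add_le_hEnt_add_mul_log hb hq

theorem stmt11 (a b : ℝ) (ha : 0 < a) (hb : 0 < b) (hab : 1 ≤ a * b)
    (y : ℝ) (hy : y ∈ Set.Ioo (0:ℝ) 1) :
    IsLeast
      {v : ℝ | ∃ F G : ℝ, F ∈ Set.Icc 0 y ∧ G ∈ Set.Icc F (F + 1 - y) ∧
        v = y * hEnt (F / y) - F * Real.log (a * b)
            + (1 - y) * hEnt ((G - F) / (1 - y)) + G * Real.log b}
      (y * Real.log (1 / (1 + a)) + (1 - y) * Real.log (b / (1 + b)))
    ∧ (y * hEnt ((a * y / (1 + a)) / y) - (a * y / (1 + a)) * Real.log (a * b)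
        + (1 - y) * hEnt (((a * y / (1 + a) + (1 - y) / (1 + b)) - a * y / (1 + a)) / (1 - y))
        + (a * y / (1 + a) + (1 - y) / (1 + b)) * Real.log b)
      = y * Real.log (1 / (1 + a)) + (1 - y) * Real.log (b / (1 + b)) :=
  stmt11_general a b ha hb y hy
end
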